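/- Let P be reversible with positive invariant distribution μ, f : S → ℝ^m with |f(s)| ≤ 1 for all s, and u ∈ ℝ^m with |u| ≤ 1. Let λ₀(u) be the largest eigenvalue (in absolute value) of the perturbed matrix P(u)_{st} = P_{st} e^{⟨f(t),u⟩}, and μ^(0) any initial distribution. Then (μ^(0), [P(u)]^N 1_S) ≤ 3 ‖μ^(0)/μ‖ λ₀(u)^N, where ‖μ^(0)/μ‖ = (Σ_s (μ^(0)_s)²/μ_s)^{1/2} and 1_S is the all-ones vector. -/

import Mathlib

open Matrix
open scoped Matrix.Norms.L2Operator

/-!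
Tilting `μ` by `exp ⟨f s, u⟩` keeps `P(u)` reversible, with weights `d s = μ s * exp ⟨f s, u⟩`.
Hence `M = diag(√d) P(u) diag(√d)⁻¹` is symmetric and has the eigenvalues of `P(u)`, so its
L2 operator norm is at most `λ₀(u)`. Since `(μ⁰, P(u)^N 1) = (μ⁰/√d, M^N √d)`, Cauchy–Schwarz
bounds it by `λ₀(u)^N ‖μ⁰/√d‖ ‖√d‖`, and `|⟨f s, u⟩| ≤ 1` gives `‖μ⁰/√d‖ ≤ √e ‖μ⁰/μ‖` and
`‖√d‖ ≤ √e`, with `e ≤ 3`.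
-/

namespace Matrix

lemma IsHermitian.l2_opNorm_le {𝕜 n : Type*} [RCLike 𝕜] [Fintype n] [DecidableEq n]
    {A : Matrix n n 𝕜} (hA : A.IsHermitian) {r : ℝ} (hr : 0 ≤ r)
    (h : ∀ i, |hA.eigenvalues i| ≤ r) : ‖A‖ ≤ r := by
  rw [hA.spectral_theorem, Unitary.conjStarAlgAut_apply, ← Unitary.coe_star,
    CStarRing.norm_mul_coe_unitary, CStarRing.norm_coe_unitary_mul, l2_opNorm_diagonal]
  refine (pi_norm_le_iff_of_nonneg hr).2 fun i => ?_
  simpa using h i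

lemma l2_opNorm_pow_mulVec_le {𝕜 n : Type*} [RCLike 𝕜] [Fintype n] [DecidableEq n]
    (A : Matrix n n 𝕜) (x : EuclideanSpace 𝕜 n) (N : ℕ) :
    ‖(EuclideanSpace.equiv n 𝕜).symm (A ^ N *ᵥ x)‖ ≤ ‖A‖ ^ N * ‖x‖ := by
  induction N with
  | zero => simp
  | succ N ih =>
    have := A.l2_opNorm_mulVec ((EuclideanSpace.equiv n 𝕜).symm (A ^ N *ᵥ x))
    rw [pow_succ', ← mulVec_mulVec, pow_succ', mul_assoc]
    refine le_trans ?_ (mul_le_mul_of_nonneg_left ih (norm_nonneg _))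
    simpa using this

lemma dotProduct_pow_mulVec_le {n : Type*} [Fintype n] [DecidableEq n]
    (A : Matrix n n ℝ) (x y : n → ℝ) (N : ℕ) :
    x ⬝ᵥ (A ^ N *ᵥ y) ≤ ‖A‖ ^ N * √(∑ i, x i ^ 2) * √(∑ i, y i ^ 2) := by
  have hnorm (z : n → ℝ) : ‖WithLp.toLp 2 z‖ = √(∑ i, z i ^ 2) := by
    simp [EuclideanSpace.norm_eq]
  calc x ⬝ᵥ (A ^ N *ᵥ y)
      = inner ℝ (WithLp.toLp 2 x) ((EuclideanSpace.equiv n ℝ).symm (A ^ N *ᵥ y)) := by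
        simp [EuclideanSpace.inner_eq_star_dotProduct, dotProduct_comm]
    _ ≤ ‖WithLp.toLp 2 x‖ * ‖(EuclideanSpace.equiv n ℝ).symm (A ^ N *ᵥ y)‖ :=
        real_inner_le_norm _ _
    _ ≤ ‖WithLp.toLp 2 x‖ * (‖A‖ ^ N * ‖WithLp.toLp 2 y‖) :=
        mul_le_mul_of_nonneg_left (A.l2_opNorm_pow_mulVec_le _ N) (norm_nonneg _)
    _ = ‖A‖ ^ N * √(∑ i, x i ^ 2) * √(∑ i, y i ^ 2) := by
        rw [hnorm, hnorm]; ring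

lemma abs_le_of_mulVec_eq_smul {n : Type*} [Fintype n] {A : Matrix n n ℝ} {r a : ℝ} {v : n → ℝ}
    (h_max : ∀ (z : ℂ) (w : n → ℂ), w ≠ 0 → A.map Complex.ofReal *ᵥ w = z • w → ‖z‖ ≤ r)
    (hv : v ≠ 0) (hav : A *ᵥ v = a • v) : |a| ≤ r := by
  have hv' : Complex.ofRealHom ∘ v ≠ 0 := fun h0 =>
    hv (funext fun s => Complex.ofReal_eq_zero.1 (congrFun h0 s))
  have hav' :
      A.map Complex.ofReal *ᵥ (Complex.ofRealHom ∘ v) = (a : ℂ) • (Complex.ofRealHom ∘ v) :=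
    funext fun s => by
      have h := RingHom.map_mulVec Complex.ofRealHom A v s
      rw [hav] at h
      exact h.symm.trans (by simp)
  simpa using h_max a _ hv' hav'

lemma mulVec_mulVec_eq_smul_of_semiconjBy {n R : Type*} [Fintype n] [CommSemiring R]
    {Q A B : Matrix n n R} (h : SemiconjBy Q B A) {a : R} {w : n → R} (hw : B *ᵥ w = a • w) :
    A *ᵥ (Q *ᵥ w) = a • (Q *ᵥ w) := by
  rw [mulVec_mulVec, ← h.eq, ← mulVec_mulVec, hw, mulVec_smul]

def IsReversible {S : Type*} (d : S → ℝ) (A : Matrix S S ℝ) : Prop :=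
  ∀ s t, d s * A s t = d t * A t s

lemma IsReversible.tilt {S : Type*} {μ : S → ℝ} {P : Matrix S S ℝ} (h : IsReversible μ P)
    (w : S → ℝ) : IsReversible (fun s => μ s * w s) (Matrix.of fun s t => P s t * w t) := by
  intro s t
  simp only [Matrix.of_apply]
  linear_combination w s * w t * h s t

noncomputable def diagConj {S : Type*} (g : S → ℝ) (A : Matrix S S ℝ) : Matrix S S ℝ :=
  Matrix.of fun s t => g s * A s t / g t

lemma IsReversible.isHermitian_diagConj_sqrt {S : Type*} {d : S → ℝ} {A : Matrix S S ℝ}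
    (h : IsReversible d A) (hd : ∀ s, 0 < d s) : (diagConj (fun s => √(d s)) A).IsHermitian := by
  refine IsHermitian.ext fun s t => ?_
  have hs := Real.sqrt_pos.2 (hd s)
  have ht := Real.sqrt_pos.2 (hd t)
  simp only [diagConj, of_apply, star_trivial]
  rw [div_eq_div_iff hs.ne' ht.ne']
  linear_combination A t s * Real.mul_self_sqrt (hd t).le - A s t * Real.mul_self_sqrt (hd s).le
    - h s t

section diagConj

variable {S : Type*} [Fintype S] [DecidableEq S] {g : S → ℝ}

lemma semiconjBy_diagonal_diagConj (hg : ∀ s, g s ≠ 0) (A : Matrix S S ℝ) :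
    SemiconjBy (diagonal g) A (diagConj g A) := by
  ext s t
  simp [diagConj, diagonal_mul, mul_diagonal, hg t]

lemma semiconjBy_diagonal_inv_diagConj (hg : ∀ s, g s ≠ 0) (A : Matrix S S ℝ) :
    SemiconjBy (diagonal g⁻¹) (diagConj g A) A := by
  ext s t
  simp only [diagConj, diagonal_mul, Pi.inv_apply, of_apply, mul_diagonal]
  field_simp [hg s]

lemma dotProduct_pow_mulVec_one_eq_diagConj (hg : ∀ s, g s ≠ 0) (A : Matrix S S ℝ)
    (x : S → ℝ) (N : ℕ) : x ⬝ᵥ (A ^ N *ᵥ 1) = (x / g) ⬝ᵥ (diagConj g A ^ N *ᵥ g) := by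
  have h := ((semiconjBy_diagonal_diagConj hg A).pow_right N).eq
  have hg1 : diagonal g *ᵥ 1 = g := by ext; simp [mulVec_diagonal]
  have hMg : diagConj g A ^ N *ᵥ g = diagonal g *ᵥ (A ^ N *ᵥ 1) := by
    rw [mulVec_mulVec, h, ← mulVec_mulVec, hg1]
  rw [hMg]
  refine Finset.sum_congr rfl fun s _ => ?_
  simp only [Pi.div_apply, mulVec_diagonal]
  field_simp [hg s]

lemma abs_eigenvalues_diagConj_le (hg : ∀ s, g s ≠ 0) {A : Matrix S S ℝ}
    (hM : (diagConj g A).IsHermitian) {r : ℝ}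
    (h_max : ∀ (z : ℂ) (w : S → ℂ), w ≠ 0 → A.map Complex.ofReal *ᵥ w = z • w → ‖z‖ ≤ r)
    (i : S) : |hM.eigenvalues i| ≤ r := by
  refine abs_le_of_mulVec_eq_smul h_max ?_ (mulVec_mulVec_eq_smul_of_semiconjBy
    (semiconjBy_diagonal_inv_diagConj hg A) (hM.mulVec_eigenvectorBasis i))
  intro h0
  refine hM.eigenvectorBasis.orthonormal.ne_zero i (PiLp.ext fun s => ?_)
  simpa [mulVec_diagonal, hg s] using congrFun h0 s

end diagConj

end Matrix

lemma sum_sq_div_sqrt_mul_exp_le {S : Type*} [Fintype S] {μ c : S → ℝ} (hμ : ∀ s, 0 < μ s)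
    (hc : ∀ s, -1 ≤ c s) (x : S → ℝ) :
    ∑ s, (x s / √(μ s * Real.exp (c s))) ^ 2 ≤ Real.exp 1 * ∑ s, x s ^ 2 / μ s := by
  rw [Finset.mul_sum]
  refine Finset.sum_le_sum fun s _ => ?_
  have hexp : (Real.exp (c s))⁻¹ ≤ Real.exp 1 := by
    rw [← Real.exp_neg, Real.exp_le_exp]; linarith [hc s]
  rw [div_pow, Real.sq_sqrt (mul_pos (hμ s) (Real.exp_pos _)).le, div_mul_eq_div_div,
    div_eq_mul_inv _ (Real.exp _), mul_comm]
  exact mul_le_mul_of_nonneg_right hexp (div_nonneg (sq_nonneg _) (hμ s).le)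

lemma sum_sq_sqrt_mul_exp_le {S : Type*} [Fintype S] {μ c : S → ℝ} (hμ : ∀ s, 0 < μ s)
    (hμ_sum : ∑ s, μ s = 1) (hc : ∀ s, c s ≤ 1) :
    ∑ s, √(μ s * Real.exp (c s)) ^ 2 ≤ Real.exp 1 := by
  calc ∑ s, √(μ s * Real.exp (c s)) ^ 2 = ∑ s, μ s * Real.exp (c s) :=
        Finset.sum_congr rfl fun s _ => Real.sq_sqrt (mul_pos (hμ s) (Real.exp_pos _)).le
    _ ≤ ∑ s, μ s * Real.exp 1 :=
        Finset.sum_le_sum fun s _ =>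
          mul_le_mul_of_nonneg_left (Real.exp_le_exp.2 (hc s)) (hμ s).le
    _ = Real.exp 1 := by rw [← Finset.sum_mul, hμ_sum, one_mul]

theorem stmt_7_general {S : Type*} [Fintype S] [DecidableEq S] {m : ℕ}
    (P : Matrix S S ℝ) (μ μ0 : S → ℝ)
    (hμ_pos : ∀ s, 0 < μ s) (hμ_sum : ∑ s, μ s = 1)
    (h_rev : ∀ s t, μ s * P s t = μ t * P t s)
    (f : S → EuclideanSpace ℝ (Fin m)) (u : EuclideanSpace ℝ (Fin m))
    (hf : ∀ s, ‖f s‖ ≤ 1) (hu : ‖u‖ ≤ 1)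
    (Pu : Matrix S S ℝ) (hPu : Pu = fun s t => P s t * Real.exp (inner ℝ (f t) u : ℝ))
    (lam : ℝ)
    -- `lam` is an eigenvalue of `P(u)`
    (h_eig : ∃ v : S → ℝ, v ≠ 0 ∧ Pu.mulVec v = lam • v)
    -- `lam` has the largest absolute value among all (complex) eigenvalues of `P(u)`
    (h_max : ∀ (z : ℂ) (v : S → ℂ), v ≠ 0 →
      (Pu.map (Complex.ofReal)).mulVec v = z • v → ‖z‖ ≤ lam)
    (N : ℕ) :
    ∑ s, μ0 s * ((Pu ^ N).mulVec (fun _ => (1 : ℝ))) s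
      ≤ 3 * Real.sqrt (∑ s, (μ0 s) ^ 2 / μ s) * lam ^ N := by
  set c : S → ℝ := fun s => inner ℝ (f s) u
  have hc (s : S) : |c s| ≤ 1 :=
    (abs_real_inner_le_norm _ _).trans (mul_le_one₀ (hf s) (norm_nonneg _) hu)
  set g : S → ℝ := fun s => √(μ s * Real.exp (c s))
  have hg (s : S) : g s ≠ 0 := (Real.sqrt_pos.2 (mul_pos (hμ_pos s) (Real.exp_pos _))).ne'
  have hM : (diagConj g Pu).IsHermitian := by
    subst hPu
    exact IsReversible.isHermitian_diagConj_sqrt (IsReversible.tilt h_rev _)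
      fun s => mul_pos (hμ_pos s) (Real.exp_pos _)
  have hlam : 0 ≤ lam := by
    obtain ⟨v, hv, hlamv⟩ := h_eig
    exact (abs_nonneg lam).trans (abs_le_of_mulVec_eq_smul h_max hv hlamv)
  have hMnorm : ‖diagConj g Pu‖ ≤ lam :=
    hM.l2_opNorm_le hlam (abs_eigenvalues_diagConj_le hg hM h_max)
  calc μ0 ⬝ᵥ (Pu ^ N *ᵥ 1) = (μ0 / g) ⬝ᵥ (diagConj g Pu ^ N *ᵥ g) :=
        dotProduct_pow_mulVec_one_eq_diagConj hg Pu μ0 N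
    _ ≤ ‖diagConj g Pu‖ ^ N * √(∑ s, (μ0 s / g s) ^ 2) * √(∑ s, g s ^ 2) :=
        dotProduct_pow_mulVec_le _ _ _ N
    _ ≤ lam ^ N * √(Real.exp 1 * ∑ s, μ0 s ^ 2 / μ s) * √(Real.exp 1) := by
        gcongr
        · exact sum_sq_div_sqrt_mul_exp_le hμ_pos (fun s => (abs_le.1 (hc s)).1) μ0
        · exact sum_sq_sqrt_mul_exp_le hμ_pos hμ_sum (fun s => (abs_le.1 (hc s)).2)
    _ = Real.exp 1 * √(∑ s, μ0 s ^ 2 / μ s) * lam ^ N := by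
        rw [Real.sqrt_mul (Real.exp_pos 1).le]
        linear_combination
          √(∑ s, μ0 s ^ 2 / μ s) * lam ^ N * Real.mul_self_sqrt (Real.exp_pos 1).le
    _ ≤ 3 * √(∑ s, μ0 s ^ 2 / μ s) * lam ^ N := by
        gcongr
        linarith [Real.exp_one_lt_d9]

/-- Lemma 8: `(μ⁰, [P(u)]^N 1_S) ≤ 3 ‖μ⁰/μ‖ λ₀(u)^N`, where `λ₀(u)` is the largest
(in absolute value) eigenvalue of the perturbed matrix `P(u)`. -/
theorem stmt_7 {S : Type*} [Fintype S] [DecidableEq S] {m : ℕ}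
    (P : Matrix S S ℝ) (μ μ0 : S → ℝ)
    (hP_nonneg : ∀ s t, 0 ≤ P s t)
    (hP_stoch : ∀ s, ∑ t, P s t = 1)
    (hμ_pos : ∀ s, 0 < μ s) (hμ_sum : ∑ s, μ s = 1)
    (h_rev : ∀ s t, μ s * P s t = μ t * P t s)
    (hμ0_nonneg : ∀ s, 0 ≤ μ0 s) (hμ0_sum : ∑ s, μ0 s = 1)
    (f : S → EuclideanSpace ℝ (Fin m)) (u : EuclideanSpace ℝ (Fin m))
    (hf : ∀ s, ‖f s‖ ≤ 1) (hu : ‖u‖ ≤ 1)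
    (Pu : Matrix S S ℝ) (hPu : Pu = fun s t => P s t * Real.exp (inner ℝ (f t) u : ℝ))
    (lam : ℝ)
    -- `lam` is an eigenvalue of `P(u)`
    (h_eig : ∃ v : S → ℝ, v ≠ 0 ∧ Pu.mulVec v = lam • v)
    -- `lam` has the largest absolute value among all (complex) eigenvalues of `P(u)`
    (h_max : ∀ (z : ℂ) (v : S → ℂ), v ≠ 0 →
      (Pu.map (Complex.ofReal)).mulVec v = z • v → ‖z‖ ≤ lam)
    (N : ℕ) :
    ∑ s, μ0 s * ((Pu ^ N).mulVec (fun _ => (1 : ℝ))) s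
      ≤ 3 * Real.sqrt (∑ s, (μ0 s) ^ 2 / μ s) * lam ^ N :=
  stmt_7_general P μ μ0 hμ_pos hμ_sum h_rev f u hf hu Pu hPu lam h_eig h_max N
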